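/- For positive integers α and β with 1 ≤ α, β ≤ p-1 for a prime p ≥ 3, ∑_{k=0}^{α} (-1)^k C(α,k) C(β,k) C(-1-α-β,k) = C(α+β, α)^2. In particular, if additionally α + β ≥ p, this sum is divisible by p^2. -/

import Mathlib

/-- Generalized binomial coefficient `C(x,k) = x(x-1)⋯(x-k+1)/k!` for rational `x`. -/
def gbinom (x : ℚ) (k : ℕ) : ℚ := (∏ i ∈ Finset.range k, (x - i)) / (Nat.factorial k)

/-!
The sum `S_a(x) = ∑ₖ C(a,k) C(x,k) C(x+a+k,k)` satisfies `(a+1)² S_{a+1}(x) = (x+a+1)² S_a(x)`: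
by Zeilberger's method, `(a+1)(x+a+1)` times the difference of the two sides' summands
telescopes in `k`. With `S_0 = 1` this gives `S_a(x) = C(x+a,a)²`. Upper negation,
`(-1)ᵏ C(-1-a-b,k) = C(a+b+k,k)`, turns the sum of the theorem into `S_a(b)`, and
`p ∣ C(a+b,a)` when `a, b < p ≤ a + b`.
-/

open Finset

@[simp]
lemma gbinom_zero_right (x : ℚ) : gbinom x 0 = 1 := by
  simp [gbinom]

lemma succ_mul_gbinom_succ_right (x : ℚ) (k : ℕ) :
    (k + 1) * gbinom x (k + 1) = (x - k) * gbinom x k := by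
  simp only [gbinom, prod_range_succ, Nat.factorial_succ, Nat.cast_mul, Nat.cast_succ]
  field_simp

lemma succ_mul_gbinom_succ_succ (y : ℚ) (k : ℕ) :
    (k + 1) * gbinom (y + 1) (k + 1) = (y + 1) * gbinom y k := by
  have hshift : ∏ i ∈ range k, (y + 1 - ((i + 1 : ℕ) : ℚ)) = ∏ i ∈ range k, (y - i) :=
    prod_congr rfl fun i _ => by push_cast; ring
  rw [gbinom, gbinom, prod_range_succ', hshift, Nat.factorial_succ, Nat.cast_mul]
  push_cast
  field_simp
  ring

lemma sub_mul_gbinom_add_one (y : ℚ) (k : ℕ) :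
    (y + 1 - k) * gbinom (y + 1) k = (y + 1) * gbinom y k := by
  rw [← succ_mul_gbinom_succ_succ, succ_mul_gbinom_succ_right]

lemma cast_choose_succ_right_mul (n k : ℕ) :
    (n.choose (k + 1) : ℚ) * (k + 1) = n.choose k * (n - k) := by
  rcases le_or_gt k n with hkn | hnk
  · have h := congrArg (Nat.cast : ℕ → ℚ) (Nat.choose_succ_right_eq n k)
    push_cast [Nat.cast_sub hkn] at h
    exact h
  · simp [Nat.choose_eq_zero_of_lt hnk, Nat.choose_eq_zero_of_lt (hnk.trans k.lt_succ_self)]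

lemma gbinom_natCast (n k : ℕ) : gbinom n k = n.choose k := by
  induction k with
  | zero => simp
  | succ k ih =>
    have h := succ_mul_gbinom_succ_right n k
    rw [ih] at h
    exact mul_left_cancel₀ (by positivity : (k + 1 : ℚ) ≠ 0)
      (by linear_combination h - cast_choose_succ_right_mul n k)

lemma neg_one_pow_mul_gbinom_neg_sub_one (y : ℚ) (k : ℕ) :
    (-1) ^ k * gbinom (-1 - y) k = gbinom (y + k) k := by
  induction k with
  | zero => simp
  | succ k ih =>
    have hnum := succ_mul_gbinom_succ_right (-1 - y) k
    have hden := succ_mul_gbinom_succ_succ (y + k) k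
    push_cast
    rw [← add_assoc]
    refine mul_left_cancel₀ (by positivity : (k + 1 : ℚ) ≠ 0) ?_
    linear_combination (-1) ^ (k + 1) * hnum - hden + (y + k + 1) * ih

namespace Saalschutz

def term (x : ℚ) (a k : ℕ) : ℚ := a.choose k * gbinom x k * gbinom (x + a + k) k

-- Zeilberger's certificate for the recurrence in `a`.
def cert (x : ℚ) (a k : ℕ) : ℚ :=
  -k ^ 3 * (x + 2 * a + 2) * (a + 1).choose k * gbinom x k * gbinom (x + a + k) k

lemma term_eq_zero_of_lt {x : ℚ} {a k : ℕ} (h : a < k) : term x a k = 0 := by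
  simp [term, Nat.choose_eq_zero_of_lt h]

lemma mul_term_succ_sub_mul_term (x : ℚ) (a k : ℕ) :
    (a + 1) * (x + a + 1) * ((a + 1) ^ 2 * term x (a + 1) k - (x + a + 1) ^ 2 * term x a k)
      = cert x a (k + 1) - cert x a k := by
  have hchoose : (a + 1) * (a.choose k : ℚ) = (a + 1).choose k * (a + 1 - k) := by
    have h := congrArg (Nat.cast : ℕ → ℚ) (Nat.add_one_mul_choose_eq a k)
    push_cast at h
    rw [h, cast_choose_succ_right_mul]
    push_cast; ring
  have hupper : (x + a + 1) * gbinom (x + (a + 1 : ℕ) + k) k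
      = (x + a + 1 + k) * gbinom (x + a + k) k := by
    rw [show x + ((a + 1 : ℕ) : ℚ) + k = x + a + k + 1 by push_cast; ring]
    linear_combination sub_mul_gbinom_add_one (x + a + k) k
  have hstep : ((k + 1 : ℕ) : ℚ) ^ 3 * ((a + 1).choose (k + 1) * gbinom x (k + 1)
        * gbinom (x + a + (k + 1 : ℕ)) (k + 1))
      = ((a + 1).choose k * ((a + 1 : ℕ) - k)) * ((x - k) * gbinom x k)
        * ((x + a + k + 1) * gbinom (x + a + k) k) := by
    rw [← cast_choose_succ_right_mul, ← succ_mul_gbinom_succ_right,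
      show x + a + k + 1 = (x + a + k) + 1 by ring, ← succ_mul_gbinom_succ_succ,
      show x + a + ((k + 1 : ℕ) : ℚ) = (x + a + k) + 1 by push_cast; ring]
    push_cast; ring
  simp only [term, cert]
  push_cast at hchoose hupper hstep ⊢
  linear_combination (a + 1) ^ 3 * (a + 1).choose k * gbinom x k * hupper
    - (x + a + 1) ^ 3 * gbinom x k * gbinom (x + a + k) k * hchoose
    + (x + 2 * a + 2) * hstep

lemma sq_mul_sum_term_succ {x : ℚ} {a : ℕ} (hx : x + a + 1 ≠ 0) :
    (a + 1) ^ 2 * ∑ k ∈ range (a + 2), term x (a + 1) k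
      = (x + a + 1) ^ 2 * ∑ k ∈ range (a + 1), term x a k := by
  have htelescope := sum_range_sub (cert x a) (a + 2)
  have hcert_top : cert x a (a + 2) = 0 := by simp [cert]
  have hcert_zero : cert x a 0 = 0 := by simp [cert]
  simp only [← mul_term_succ_sub_mul_term, ← mul_sum, sum_sub_distrib, hcert_top, hcert_zero,
    sum_range_succ (term x a) (a + 1), term_eq_zero_of_lt (Nat.lt_succ_self a), add_zero,
    sub_zero] at htelescope
  have hne : (a + 1 : ℚ) * (x + a + 1) ≠ 0 := mul_ne_zero (by positivity) hx
  linear_combination (mul_eq_zero.mp htelescope).resolve_left hne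

theorem sum_term_eq_gbinom_sq {x : ℚ} (hx : ∀ n : ℕ, x + n + 1 ≠ 0) (a : ℕ) :
    ∑ k ∈ range (a + 1), term x a k = gbinom (x + a) a ^ 2 := by
  induction a with
  | zero => simp [term]
  | succ a ih =>
    have hrec := sq_mul_sum_term_succ (hx a)
    rw [ih] at hrec
    have habs := succ_mul_gbinom_succ_succ (x + a) a
    push_cast
    rw [← add_assoc]
    refine mul_left_cancel₀ (by positivity : ((a : ℚ) + 1) ^ 2 ≠ 0) ?_
    linear_combination hrec - (x + a + 1) * gbinom (x + a) a * habs
      - (a + 1) * gbinom (x + a + 1) (a + 1) * habs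

end Saalschutz

theorem saalschutz_special_general (p : ℕ) (hp : p.Prime)
    (α β : ℕ) (hα : α ≤ p - 1) (hβ : β ≤ p - 1) :
    (∑ k ∈ Finset.range (α + 1),
        (-1 : ℚ)^k * gbinom (α : ℚ) k * gbinom (β : ℚ) k * gbinom (-1 - α - β) k
      = (((α + β).choose α : ℚ))^2) ∧
    (p ≤ α + β → ∃ m : ℤ, ∑ k ∈ Finset.range (α + 1),
        (-1 : ℚ)^k * gbinom (α : ℚ) k * gbinom (β : ℚ) k * gbinom (-1 - α - β) k
      = (p : ℚ)^2 * m) := by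
  have hterm (k : ℕ) : (-1 : ℚ) ^ k * gbinom α k * gbinom β k * gbinom (-1 - α - β) k
      = Saalschutz.term β α k := by
    rw [Saalschutz.term, gbinom_natCast, show (-1 - α - β : ℚ) = -1 - (β + α) by ring,
      ← neg_one_pow_mul_gbinom_neg_sub_one]
    ring
  have hsum : ∑ k ∈ range (α + 1),
      (-1 : ℚ) ^ k * gbinom α k * gbinom β k * gbinom (-1 - α - β) k
        = ((α + β).choose α : ℚ) ^ 2 := by
    rw [sum_congr rfl fun k _ => hterm k,
      Saalschutz.sum_term_eq_gbinom_sq (fun n => by positivity), ← Nat.cast_add, gbinom_natCast,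
      add_comm β]
  refine ⟨hsum, fun hp_le => ?_⟩
  obtain ⟨m, hm⟩ := hp.dvd_choose_add (Nat.lt_of_le_sub_one hp.pos hα)
    (Nat.lt_of_le_sub_one hp.pos hβ) hp_le
  exact ⟨m ^ 2, by rw [hsum, hm]; push_cast; ring⟩

/-- For a prime `p ≥ 3` and integers `1 ≤ α, β ≤ p-1`,
`∑_{k=0}^{α} (-1)^k C(α,k) C(β,k) C(-1-α-β,k) = C(α+β,α)²`; in particular the sum
is divisible by `p²` when `α + β ≥ p`. -/
theorem saalschutz_special (p : ℕ) (hp : p.Prime) (hp3 : 3 ≤ p)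
    (α β : ℕ) (h1α : 1 ≤ α) (hα : α ≤ p - 1) (h1β : 1 ≤ β) (hβ : β ≤ p - 1) :
    (∑ k ∈ Finset.range (α + 1),
        (-1 : ℚ)^k * gbinom (α : ℚ) k * gbinom (β : ℚ) k * gbinom (-1 - α - β) k
      = (((α + β).choose α : ℚ))^2) ∧
    (p ≤ α + β → ∃ m : ℤ, ∑ k ∈ Finset.range (α + 1),
        (-1 : ℚ)^k * gbinom (α : ℚ) k * gbinom (β : ℚ) k * gbinom (-1 - α - β) k
      = (p : ℚ)^2 * m) :=
  saalschutz_special_general p hp α β hα hβ
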